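/- Let (V, ω) be a symplectic vector space of dimension 2n with n > 2, and let 1 ≤ k ≤ n-2. For an alternating 2-form α on V, α ∧ ω^k = 0 if and only if α = 0. -/

import Mathlib

open scoped BigOperators

noncomputable section

/-- The wedge product of a raw `k`-form and a raw `l`-form on a vector space. -/
def wedgeRaw {V : Type*} (k l : ℕ) (α : (Fin k → V) → ℝ) (β : (Fin l → V) → ℝ) :
    (Fin (k + l) → V) → ℝ :=
  fun v => (1 / ((k.factorial : ℝ) * (l.factorial : ℝ))) *
    ∑ σ : Equiv.Perm (Fin (k + l)), ((Equiv.Perm.sign σ : ℤ) : ℝ) *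
      (α (fun i => v (σ (Fin.castAdd l i))) * β (fun i => v (σ (Fin.natAdd k i))))

/-- The `k`-fold wedge power of a raw 2-form. -/
def wpow {V : Type*} (ω : (Fin 2 → V) → ℝ) : (k : ℕ) → (Fin (2 * k) → V) → ℝ
  | 0 => fun _ => 1
  | k + 1 => wedgeRaw (2 * k) 2 (wpow ω k) ω

/-- Reindex a raw form along an equality of arities. -/
def castFormV {V : Type*} {k k' : ℕ} (h : k = k') (α : (Fin k → V) → ℝ) :
    (Fin k' → V) → ℝ :=
  fun v => α (fun i => v (Fin.cast h i))

/-- Interior product (contraction) of a vector with a raw `(k+1)`-form. -/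
def iprodV {V : Type*} {k : ℕ} (X : V) (α : (Fin (k + 1) → V) → ℝ) :
    (Fin k → V) → ℝ :=
  fun v => α (Fin.cons X v)

/-- A (raw, `x`-dependent) differential `k`-form on the model space `E`. -/
abbrev Form (E : Type*) (k : ℕ) := E → (Fin k → E) → ℝ

variable {E : Type*} [NormedAddCommGroup E] [NormedSpace ℝ E]

/-- The exterior derivative of a raw differential `k`-form on the flat space `E`. -/
def extDerivFlat {k : ℕ} (α : Form E k) : Form E (k + 1) :=
  fun x v => ∑ i : Fin (k + 1), (-1 : ℝ) ^ (i : ℕ) *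
    fderiv ℝ (fun y => α y (i.removeNth v)) x (v i)

/-- Interior product of a vector field with a differential `(k+1)`-form. -/
def iprodF {k : ℕ} (X : E → E) (α : Form E (k + 1)) : Form E k :=
  fun x v => α x (Fin.cons (X x) v)

/-- Reindex a differential form along an equality of arities. -/
def castForm {k k' : ℕ} (h : k = k') (α : Form E k) : Form E k' :=
  fun x v => α x (fun i => v (Fin.cast h i))

/-- The Lie derivative of a differential `k`-form along a vector field, on flat space. -/
def lieDeriv {k : ℕ} (X : E → E) (α : Form E k) : Form E k :=
  fun x v => fderiv ℝ (fun y => α y v) x (X x) +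
    ∑ i : Fin k, α x (Function.update v i (fderiv ℝ X x (v i)))

/-- The Lie bracket of vector fields on flat space. -/
def lieBracket (X Y : E → E) : E → E :=
  fun x => fderiv ℝ Y x (X x) - fderiv ℝ X x (Y x)

/-- Pointwise wedge power of a differential 2-form. -/
def wpowF (ω : Form E 2) (k : ℕ) : Form E (2 * k) :=
  fun x => wpow (ω x) k

/-!
`wpow ω k` and `α ∧ ω^k` are alternations of products of `ω / 2` (and `α / 2`) over consecutive
pairs of arguments. On a vector family split into pairs for which these products vanish unless
each pair of arguments comes from a single pair of the family, only the permutations mapping pairs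
to pairs contribute, all with the same weight, so the value is `2^(k+1)` times a sum over the
permutations of the pairs. As `k + 2 ≤ n`, two `ω`-orthogonal vectors `u, v` can be completed by a
symplectic family of size `k` inside `{u, v}^ω`; on this family `α ∧ ω^k` takes the value
`k! α(u, v)`. So `α` vanishes on `ω`-orthogonal pairs, which forces `α = c ω`, and evaluating
`c ω ∧ ω^k` on a symplectic family of size `k + 1 ≤ n` gives `c (k+1)! = 0`.
-/

open Equiv Equiv.Perm Finset

theorem Equiv.Perm.sign_cast_mul_self {α : Type*} [Fintype α] [DecidableEq α] (σ : Perm α) :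
    ((sign σ : ℤ) : ℝ) * ((sign σ : ℤ) : ℝ) = 1 := by
  rw [← Int.cast_mul, ← Units.val_mul, Int.units_mul_self, Units.val_one, Int.cast_one]

section AltSum

variable {V : Type*}

def altSum {N : ℕ} (F : (Fin N → V) → ℝ) (v : Fin N → V) : ℝ :=
  ∑ σ : Perm (Fin N), ((sign σ : ℤ) : ℝ) * F (v ∘ σ)

theorem wedgeRaw_altSum {k l : ℕ} (F : (Fin k → V) → ℝ) (G : (Fin l → V) → ℝ) :
    wedgeRaw k l (altSum F) (altSum G) =
      altSum fun v => F (v ∘ Fin.castAdd l) * G (v ∘ Fin.natAdd k) := by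
  funext v
  set H : Perm (Fin (k + l)) → ℝ := fun ρ =>
    ((sign ρ : ℤ) : ℝ) * (F (v ∘ ρ ∘ Fin.castAdd l) * G (v ∘ ρ ∘ Fin.natAdd k))
  let ι : Perm (Fin k) × Perm (Fin l) → Perm (Fin (k + l)) := fun τ =>
    finSumFinEquiv.permCongr (τ.1.sumCongr τ.2)
  have hterm : ∀ σ τ, ((sign σ : ℤ) : ℝ) *
      ((((sign τ.1 : ℤ) : ℝ) * F (v ∘ σ ∘ Fin.castAdd l ∘ τ.1)) *
        (((sign τ.2 : ℤ) : ℝ) * G (v ∘ σ ∘ Fin.natAdd k ∘ τ.2))) = H (σ * ι τ) := by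
    rintro σ ⟨τ₁, τ₂⟩
    have h₁ : ⇑(ι (τ₁, τ₂)) ∘ Fin.castAdd l = Fin.castAdd l ∘ τ₁ := by
      funext i; simp [ι, Equiv.permCongr_apply]
    have h₂ : ⇑(ι (τ₁, τ₂)) ∘ Fin.natAdd k = Fin.natAdd k ∘ τ₂ := by
      funext i; simp [ι, Equiv.permCongr_apply]
    simp only [H, coe_mul, Function.comp_assoc, h₁, h₂, map_mul, ι, sign_permCongr,
      sign_sumCongr, Units.val_mul, Int.cast_mul]
    ring
  have hσ : ∀ σ : Perm (Fin (k + l)), ((sign σ : ℤ) : ℝ) *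
      (altSum F (fun i => v (σ (Fin.castAdd l i))) * altSum G (fun i => v (σ (Fin.natAdd k i))))
        = ∑ τ, H (σ * ι τ) := by
    intro σ
    rw [altSum, altSum, Finset.sum_mul_sum, ← Fintype.sum_prod_type', Finset.mul_sum]
    exact Finset.sum_congr rfl fun τ _ => hterm σ τ
  calc wedgeRaw k l (altSum F) (altSum G) v
      = (1 / ((k.factorial : ℝ) * l.factorial)) * ∑ τ, ∑ σ, H (σ * ι τ) := by
        rw [wedgeRaw, Finset.sum_congr rfl fun σ _ => hσ σ, Finset.sum_comm]
    _ = altSum (fun v => F (v ∘ Fin.castAdd l) * G (v ∘ Fin.natAdd k)) v := by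
        -- each of the `k! l!` permutations `ι τ` reproduces the whole alternating sum
        have hinner : ∀ τ, ∑ σ, H (σ * ι τ) = ∑ ρ, H ρ := fun τ =>
          Equiv.sum_comp (Equiv.mulRight (ι τ)) H
        rw [Finset.sum_congr rfl fun τ _ => hinner τ,
          Finset.sum_const, Finset.card_univ, Fintype.card_prod, Fintype.card_perm,
          Fintype.card_perm, Fintype.card_fin, Fintype.card_fin, nsmul_eq_mul]
        simp only [altSum, H]
        field_simp
        push_cast
        rfl

theorem altSum_alternatingMap {N : ℕ} [AddCommGroup V] [Module ℝ V] (f : V [⋀^Fin N]→ₗ[ℝ] ℝ) :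
    altSum (fun v => (N.factorial : ℝ)⁻¹ * f v) = ⇑f := by
  funext v
  simp only [altSum, AlternatingMap.map_perm, Units.smul_def, zsmul_eq_mul]
  have : ∀ σ : Perm (Fin N),
      ((sign σ : ℤ) : ℝ) * ((N.factorial : ℝ)⁻¹ * (((sign σ : ℤ) : ℝ) * f v)) =
        (N.factorial : ℝ)⁻¹ * f v := fun σ => by
    linear_combination ((N.factorial : ℝ)⁻¹ * f v) * sign_cast_mul_self σ
  simp only [this, Finset.sum_const, Finset.card_univ, Fintype.card_perm, Fintype.card_fin,
    nsmul_eq_mul]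
  field_simp

theorem altSum_comp_equiv {X : Type*} [Fintype X] [DecidableEq X] {N : ℕ} (E : X ≃ Fin N)
    (F : (X → V) → ℝ) (w : X → V) :
    altSum (fun v => F (v ∘ E)) (w ∘ E.symm) = ∑ ψ : Perm X, ((sign ψ : ℤ) : ℝ) * F (w ∘ ψ) := by
  rw [altSum, ← Equiv.sum_comp E.permCongr]
  refine Finset.sum_congr rfl fun ψ _ => ?_
  rw [sign_permCongr]
  congr 2
  funext x
  simp [Equiv.permCongr_apply]

theorem wedgeRaw_smul_left {k l : ℕ} (c : ℝ) (α : (Fin k → V) → ℝ)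
    (β : (Fin l → V) → ℝ) : wedgeRaw k l (c • α) β = c • wedgeRaw k l α β := by
  funext v
  simp only [wedgeRaw, Pi.smul_apply, smul_eq_mul, Finset.mul_sum]
  exact Finset.sum_congr rfl fun _ _ => by ring

end AltSum

section PairProducts

variable {V : Type*}

def halfPairProd (ω : (Fin 2 → V) → ℝ) : (k : ℕ) → (Fin (2 * k) → V) → ℝ
  | 0 => fun _ => 1
  | k + 1 => fun v => halfPairProd ω k (v ∘ Fin.castAdd 2) * (2⁻¹ * ω (v ∘ Fin.natAdd (2 * k)))

theorem wpow_eq_altSum [AddCommGroup V] [Module ℝ V] (ω : V [⋀^Fin 2]→ₗ[ℝ] ℝ) (k : ℕ) :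
    wpow ω k = altSum (halfPairProd ω k) := by
  induction k with
  | zero =>
    funext v
    simp only [wpow, altSum, halfPairProd, mul_one]
    change (1 : ℝ) = ∑ σ : Perm (Fin 0), _
    simp
  | succ k ih =>
    rw [wpow, ih]
    conv_lhs => arg 4; rw [← altSum_alternatingMap ω]
    rw [wedgeRaw_altSum]
    congr 1

def pairEquiv {k N : ℕ} (h : k * 2 = N) : Fin k × Fin 2 ≃ Fin N :=
  finProdFinEquiv.trans (finCongr h)

@[simp] theorem pairEquiv_val {k N : ℕ} (h : k * 2 = N) (x : Fin k × Fin 2) :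
    (pairEquiv h x : ℕ) = x.2 + 2 * x.1 := by
  simp [pairEquiv]

theorem halfPairProd_eq_prod (ω : (Fin 2 → V) → ℝ) (k : ℕ) (v : Fin (2 * k) → V) :
    halfPairProd ω k v =
      ∏ i : Fin k, 2⁻¹ * ω fun b => v (pairEquiv (Nat.mul_comm k 2) (i, b)) := by
  induction k with
  | zero => simp [halfPairProd]
  | succ k ih =>
    have h₁ : ∀ (i : Fin k) (b : Fin 2), Fin.castAdd 2 (pairEquiv (Nat.mul_comm k 2) (i, b)) =
        pairEquiv (Nat.mul_comm (k + 1) 2) (i.castSucc, b) := by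
      intro i b; ext; simp
    have h₂ : v ∘ Fin.natAdd (2 * k) =
        fun b => v (pairEquiv (Nat.mul_comm (k + 1) 2) (Fin.last k, b)) := by
      funext b; exact congrArg v (Fin.ext (by simp; ring))
    simp only [halfPairProd, ih, Fin.prod_univ_castSucc, Function.comp_apply, h₁, h₂]

theorem wedgeRaw_wpow_eq_altSum [AddCommGroup V] [Module ℝ V] (α ω : V [⋀^Fin 2]→ₗ[ℝ] ℝ)
    (k : ℕ) :
    wedgeRaw 2 (2 * k) ⇑α (wpow ω k) = altSum fun v =>
      ∏ i : Fin (k + 1), 2⁻¹ * (if i = 0 then α else ω)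
        fun b => v (pairEquiv (show (k + 1) * 2 = 2 + 2 * k by ring) (i, b)) := by
  rw [wpow_eq_altSum, ← altSum_alternatingMap α, wedgeRaw_altSum]
  congr 1
  funext v
  rw [halfPairProd_eq_prod, Fin.prod_univ_succ]
  simp only [Fin.succ_ne_zero, ↓reduceIte]
  have h₀ : v ∘ Fin.castAdd (2 * k) =
      fun b => v (pairEquiv (show (k + 1) * 2 = 2 + 2 * k by ring) (0, b)) := by
    funext b; exact congrArg v (Fin.ext (by simp))
  have h₁ : ∀ (i : Fin k) (b : Fin 2), Fin.natAdd 2 (pairEquiv (Nat.mul_comm k 2) (i, b)) =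
      pairEquiv (show (k + 1) * 2 = 2 + 2 * k by ring) (i.succ, b) := by
    intro i b; ext; simp [Fin.val_succ]; ring
  simp only [Function.comp_apply, h₀, h₁]
  norm_num [Nat.factorial]

end PairProducts

section BlockPerm

variable {ι : Type*}

def blockPerm (τ : Perm ι) (σ : ι → Perm (Fin 2)) : Perm (ι × Fin 2) :=
  τ.prodCongr (Equiv.refl _) * prodCongrRight σ

@[simp] theorem blockPerm_apply (τ : Perm ι) (σ : ι → Perm (Fin 2)) (x : ι × Fin 2) :
    blockPerm τ σ x = (τ x.1, σ x.1 x.2) := rfl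

theorem sign_blockPerm [Fintype ι] [DecidableEq ι] (τ : Perm ι) (σ : ι → Perm (Fin 2)) :
    sign (blockPerm τ σ) = ∏ i, sign (σ i) := by
  have : τ.prodCongr (Equiv.refl (Fin 2)) = prodCongrLeft fun _ => τ := by ext <;> rfl
  rw [blockPerm, map_mul, this, sign_prodCongrLeft, sign_prodCongrRight, Fin.prod_univ_two,
    Int.units_mul_self, one_mul]

theorem blockPerm_injective :
    Function.Injective fun p : Perm ι × (ι → Perm (Fin 2)) => blockPerm p.1 p.2 := by
  rintro ⟨τ, σ⟩ ⟨τ', σ'⟩ h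
  have h' : ∀ i b, τ i = τ' i ∧ σ i b = σ' i b := fun i b => by
    simpa using congrArg (fun ψ : Perm (ι × Fin 2) => ψ (i, b)) h
  simp only [Prod.mk.injEq]
  exact ⟨Equiv.ext fun i => (h' i 0).1, funext fun i => Equiv.ext fun b => (h' i b).2⟩

theorem exists_blockPerm_eq [Finite ι] (ψ : Perm (ι × Fin 2))
    (hψ : ∀ i, (ψ (i, 0)).1 = (ψ (i, 1)).1) :
    ∃ τ σ, blockPerm τ σ = ψ := by
  have hfst : ∀ i b, (ψ (i, b)).1 = (ψ (i, 0)).1 := by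
    intro i b
    fin_cases b
    · rfl
    · exact (hψ i).symm
  have hsnd : ∀ i, Function.Injective fun b => (ψ (i, b)).2 := by
    intro i b b' h
    exact (Prod.ext_iff.1 (ψ.injective (Prod.ext ((hfst i b).trans (hfst i b').symm) h))).2
  have hτ : Function.Injective fun i => (ψ (i, 0)).1 := by
    intro i j h
    obtain ⟨b, hb⟩ := Finite.injective_iff_surjective.1 (hsnd i) (ψ (j, 0)).2
    exact (Prod.ext_iff.1 (ψ.injective (Prod.ext ((hfst i b).trans h) hb))).1
  refine ⟨Equiv.ofBijective _ (Finite.injective_iff_bijective.1 hτ),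
    fun i => Equiv.ofBijective _ (Finite.injective_iff_bijective.1 (hsnd i)), ?_⟩
  ext ⟨i, b⟩ : 1
  exact Prod.ext (hfst i b).symm rfl

theorem sum_sign_mul_prod_eq_of_blockwise [Fintype ι] [DecidableEq ι]
    (H : ι → (Fin 2 → ι × Fin 2) → ℝ)
    (h_alt : ∀ i f (σ : Perm (Fin 2)), H i (f ∘ σ) = ((sign σ : ℤ) : ℝ) * H i f)
    (h_block : ∀ ψ : Perm (ι × Fin 2),
      ∏ i, H i (fun b => ψ (i, b)) ≠ 0 → ∀ i, (ψ (i, 0)).1 = (ψ (i, 1)).1) :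
    ∑ ψ : Perm (ι × Fin 2), ((sign ψ : ℤ) : ℝ) * ∏ i, H i (fun b => ψ (i, b)) =
      2 ^ Fintype.card ι * ∑ τ : Perm ι, ∏ i, H i (fun b => (τ i, b)) := by
  set F : Perm (ι × Fin 2) → ℝ := fun ψ => ((sign ψ : ℤ) : ℝ) * ∏ i, H i (fun b => ψ (i, b))
  -- the signs of the swaps inside the pairs cancel against `sign (blockPerm τ σ)`
  have hF : ∀ τ σ, F (blockPerm τ σ) = ∏ i, H i (fun b => (τ i, b)) := by
    intro τ σ
    simp only [F, blockPerm_apply, sign_blockPerm]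
    have hσ : ∀ i, H i (fun b => (τ i, σ i b)) =
        ((sign (σ i) : ℤ) : ℝ) * H i (fun b => (τ i, b)) :=
      fun i => h_alt i (fun b => (τ i, b)) (σ i)
    simp only [hσ, Finset.prod_mul_distrib]
    push_cast
    rw [← mul_assoc, ← Finset.prod_mul_distrib,
      Finset.prod_congr rfl fun i _ => sign_cast_mul_self (σ i), Finset.prod_const_one, one_mul]
  calc ∑ ψ, F ψ = ∑ p : Perm ι × (ι → Perm (Fin 2)), F (blockPerm p.1 p.2) := by
        refine (Finset.sum_bij_ne_zero (fun p _ _ => blockPerm p.1 p.2) (fun _ _ _ => mem_univ _)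
          (fun p _ _ q _ _ h => blockPerm_injective h) (fun ψ _ hψ => ?_)
          (fun _ _ _ => rfl)).symm
        have hprod : ∏ i, H i (fun b => ψ (i, b)) ≠ 0 := right_ne_zero_of_mul hψ
        obtain ⟨τ, σ, rfl⟩ := exists_blockPerm_eq ψ (h_block ψ hprod)
        exact ⟨(τ, σ), mem_univ _, hψ, rfl⟩
    _ = 2 ^ Fintype.card ι * ∑ τ : Perm ι, ∏ i, H i (fun b => (τ i, b)) := by
        simp only [hF, Fintype.sum_prod_type, Finset.sum_const, Finset.card_univ,
          Fintype.card_fun, Fintype.card_perm, Fintype.card_fin, nsmul_eq_mul, ← Finset.mul_sum]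
        norm_num [Nat.factorial]

end BlockPerm

theorem Equiv.Perm.mapsTo_of_mapsTo_compl {α : Type*} [Finite α] (σ : Perm α) {s : Set α}
    (h : Set.MapsTo σ sᶜ sᶜ) : Set.MapsTo σ s s := by
  have hbij := ((Set.toFinite sᶜ).injOn_iff_bijOn_of_mapsTo h).1 σ.injective.injOn
  simpa using hbij.surjOn.mapsTo_compl σ.injective

theorem sum_perm_ite_apply_zero_eq_zero (k : ℕ) (c : ℝ) :
    ∑ τ : Perm (Fin (k + 1)), (if τ 0 = 0 then c else 0) = k.factorial * c := by
  rw [← Equiv.sum_comp decomposeFin.symm, Fintype.sum_prod_type]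
  simp [decomposeFin_symm_apply_zero, Fintype.card_perm]

theorem fst_apply_eq_of_succ {k : ℕ} (ψ : Perm (Fin (k + 1) × Fin 2))
    (hblock : ∀ j : Fin k, (ψ (j.succ, 0)).1 = (ψ (j.succ, 1)).1)
    (hne : ∀ (j : Fin k) b, (ψ (j.succ, b)).1 ≠ 0) (i : Fin (k + 1)) :
    (ψ (i, 0)).1 = (ψ (i, 1)).1 := by
  cases i using Fin.cases with
  | succ j => exact hblock j
  | zero =>
    have h0 := ψ.mapsTo_of_mapsTo_compl (s := {x | x.1 = 0}) fun ⟨i, b⟩ hi => by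
      obtain ⟨j, rfl⟩ := Fin.exists_succ_eq.2 hi
      exact hne j b
    rw [h0 (show ((0 : Fin (k + 1)), (0 : Fin 2)).1 = 0 from rfl),
      h0 (show ((0 : Fin (k + 1)), (1 : Fin 2)).1 = 0 from rfl)]

section SymplecticFamily

variable {V : Type*}

def consPair {k : ℕ} (u v : V) (e : Fin k × Fin 2 → V) : Fin (k + 1) × Fin 2 → V :=
  fun x => Fin.cases (![u, v] x.2) (fun i => e (i, x.2)) x.1

@[simp] theorem consPair_zero {k : ℕ} (u v : V) (e : Fin k × Fin 2 → V) (b : Fin 2) :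
    consPair u v e (0, b) = ![u, v] b := rfl

@[simp] theorem consPair_succ {k : ℕ} (u v : V) (e : Fin k × Fin 2 → V) (j : Fin k) (b : Fin 2) :
    consPair u v e (j.succ, b) = e (j, b) := rfl

variable [AddCommGroup V] [Module ℝ V]

theorem alternatingMap_apply_eta_fin_two (f : V [⋀^Fin 2]→ₗ[ℝ] ℝ) (g : Fin 2 → V) :
    f g = f ![g 0, g 1] := by
  congr 1
  funext i
  fin_cases i <;> rfl

theorem alternatingMap_fin_two_self (f : V [⋀^Fin 2]→ₗ[ℝ] ℝ) (x : V) : f ![x, x] = 0 :=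
  f.map_eq_zero_of_eq _ (i := 0) (j := 1) rfl (by decide)

theorem alternatingMap_fin_two_swap (f : V [⋀^Fin 2]→ₗ[ℝ] ℝ) (x y : V) :
    f ![y, x] = -f ![x, y] := by
  have h := f.map_swap ![x, y] (i := 0) (j := 1) (by decide)
  rwa [show ![x, y] ∘ Equiv.swap 0 1 = ![y, x] by funext i; fin_cases i <;> rfl] at h

def IsSymplecticFamily {ι : Type*} (ω : V [⋀^Fin 2]→ₗ[ℝ] ℝ) (e : ι × Fin 2 → V) : Prop :=
  (∀ x y, x.1 ≠ y.1 → ω ![e x, e y] = 0) ∧ ∀ i, ω ![e (i, 0), e (i, 1)] = 1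

theorem consPair_apply_eq_zero_of_fst_ne {ω : V [⋀^Fin 2]→ₗ[ℝ] ℝ} {k : ℕ} {u v : V}
    {e : Fin k × Fin 2 → V} (he : ∀ x y, x.1 ≠ y.1 → ω ![e x, e y] = 0)
    (hu : ∀ x, ω ![u, e x] = 0) (hv : ∀ x, ω ![v, e x] = 0) (x y : Fin (k + 1) × Fin 2)
    (hxy : x.1 ≠ y.1) : ω ![consPair u v e x, consPair u v e y] = 0 := by
  have hhead : ∀ b y, ω ![![u, v] b, e y] = 0 := by
    intro b y
    fin_cases b
    exacts [hu y, hv y]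
  obtain ⟨i, b⟩ := x
  obtain ⟨j, c⟩ := y
  cases i using Fin.cases <;> cases j using Fin.cases
  · exact absurd rfl hxy
  · exact hhead b _
  · rw [alternatingMap_fin_two_swap, consPair_zero, consPair_succ, hhead, neg_zero]
  · exact he _ _ fun h => hxy (congrArg Fin.succ h)

theorem consPair_apply_eq_zero_of_fst_eq_zero {ω : V [⋀^Fin 2]→ₗ[ℝ] ℝ} {k : ℕ} {u v : V}
    {e : Fin k × Fin 2 → V} (he : ∀ x y, x.1 ≠ y.1 → ω ![e x, e y] = 0) (huv : ω ![u, v] = 0)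
    (hu : ∀ x, ω ![u, e x] = 0) (hv : ∀ x, ω ![v, e x] = 0) (x y : Fin (k + 1) × Fin 2)
    (hx : x.1 = 0) : ω ![consPair u v e x, consPair u v e y] = 0 := by
  obtain ⟨i, b⟩ := x
  obtain ⟨j, c⟩ := y
  obtain rfl : i = 0 := hx
  cases j using Fin.cases with
  | succ j => exact consPair_apply_eq_zero_of_fst_ne he hu hv _ _ (Fin.succ_ne_zero j).symm
  | zero =>
    fin_cases b <;> fin_cases c <;>
      simp [huv, alternatingMap_fin_two_self, alternatingMap_fin_two_swap ω u v]

theorem isSymplecticFamily_consPair {ω : V [⋀^Fin 2]→ₗ[ℝ] ℝ} {k : ℕ} {u v : V}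
    {e : Fin k × Fin 2 → V} (he : IsSymplecticFamily ω e) (huv : ω ![u, v] = 1)
    (hu : ∀ x, ω ![u, e x] = 0) (hv : ∀ x, ω ![v, e x] = 0) :
    IsSymplecticFamily ω (consPair u v e) := by
  refine ⟨consPair_apply_eq_zero_of_fst_ne he.1 hu hv, fun i => ?_⟩
  cases i using Fin.cases
  exacts [huv, he.2 _]

end SymplecticFamily

section Evaluation

variable {V : Type*} [AddCommGroup V] [Module ℝ V]

theorem wedgeRaw_wpow_apply_eq_sum_perm (α ω : V [⋀^Fin 2]→ₗ[ℝ] ℝ) (k : ℕ)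
    (w : Fin (k + 1) × Fin 2 → V)
    (h_block : ∀ ψ : Perm (Fin (k + 1) × Fin 2),
      ∏ i, 2⁻¹ * (if i = 0 then α else ω) (w ∘ fun b => ψ (i, b)) ≠ 0 →
        ∀ i, (ψ (i, 0)).1 = (ψ (i, 1)).1) :
    wedgeRaw 2 (2 * k) ⇑α (wpow ω k)
        (w ∘ (pairEquiv (show (k + 1) * 2 = 2 + 2 * k by ring)).symm) =
      2 ^ (k + 1) * ∑ τ : Perm (Fin (k + 1)),
        ∏ i, 2⁻¹ * (if i = 0 then α else ω) (w ∘ fun b => (τ i, b)) := by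
  rw [wedgeRaw_wpow_eq_altSum]
  refine ((altSum_comp_equiv _
    (fun y => ∏ i, 2⁻¹ * (if i = 0 then α else ω) fun b => y (i, b)) w).trans
    (sum_sign_mul_prod_eq_of_blockwise (fun i f => 2⁻¹ * (if i = 0 then α else ω) (w ∘ f))
      (fun i f σ => ?_) h_block)).trans (by rw [Fintype.card_fin])
  simp only [← Function.comp_assoc, AlternatingMap.map_perm, Units.smul_def, zsmul_eq_mul]
  ring

theorem wedgeRaw_wpow_apply_of_isSymplecticFamily (ω : V [⋀^Fin 2]→ₗ[ℝ] ℝ) (k : ℕ)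
    (e : Fin (k + 1) × Fin 2 → V) (he : IsSymplecticFamily ω e) :
    wedgeRaw 2 (2 * k) ⇑ω (wpow ω k)
        (e ∘ (pairEquiv (show (k + 1) * 2 = 2 + 2 * k by ring)).symm) =
      (k + 1).factorial := by
  rw [wedgeRaw_wpow_apply_eq_sum_perm]
  · have hdiag : ∀ τ : Perm (Fin (k + 1)),
        ∏ i, 2⁻¹ * (if i = 0 then ω else ω) (e ∘ fun b => (τ i, b)) = 2⁻¹ ^ (k + 1) := by
      intro τ
      refine (Finset.prod_congr rfl fun i _ => ?_).trans (Fin.prod_const (k + 1) 2⁻¹)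
      rw [ite_self, alternatingMap_apply_eta_fin_two, Function.comp_apply, Function.comp_apply,
        he.2, mul_one]
    simp only [hdiag, Finset.sum_const, Finset.card_univ, Fintype.card_perm, Fintype.card_fin,
      nsmul_eq_mul]
    rw [mul_left_comm, ← mul_pow]
    norm_num
  · intro ψ hψ i
    by_contra hne
    refine hψ (Finset.prod_eq_zero (mem_univ i) ?_)
    rw [ite_self, alternatingMap_apply_eta_fin_two, Function.comp_apply, Function.comp_apply,
      he.1 _ _ hne, mul_zero]

theorem prod_consPair_eq_ite (α ω : V [⋀^Fin 2]→ₗ[ℝ] ℝ) {k : ℕ} {u v : V}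
    {e : Fin k × Fin 2 → V} (he : IsSymplecticFamily ω e) (huv : ω ![u, v] = 0)
    (hu : ∀ x, ω ![u, e x] = 0) (hv : ∀ x, ω ![v, e x] = 0) (τ : Perm (Fin (k + 1))) :
    ∏ i, 2⁻¹ * (if i = 0 then α else ω) (consPair u v e ∘ fun b => (τ i, b)) =
      if τ 0 = 0 then 2⁻¹ ^ (k + 1) * α ![u, v] else 0 := by
  split_ifs with h0
  · have hsucc : ∀ j : Fin k, 2⁻¹ * ω (consPair u v e ∘ fun b => (τ j.succ, b)) = 2⁻¹ := by
      intro j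
      obtain ⟨j', hj'⟩ := Fin.exists_succ_eq.2
        (fun h => Fin.succ_ne_zero j (τ.injective (h.trans h0.symm)))
      rw [alternatingMap_apply_eta_fin_two, Function.comp_apply, Function.comp_apply, ← hj']
      exact (mul_eq_left₀ (by norm_num)).2 (he.2 j')
    rw [Fin.prod_univ_succ, if_pos rfl, h0, alternatingMap_apply_eta_fin_two]
    simp only [Fin.succ_ne_zero, if_false, hsucc, Finset.prod_const, Finset.card_univ,
      Fintype.card_fin, Function.comp_apply, consPair_zero]
    simp [pow_succ]
    ring
  · -- the `ω`-factor receiving the first pair `(u, v)` vanishes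
    refine Finset.prod_eq_zero (i := τ.symm 0) (mem_univ _) ?_
    rw [if_neg fun h => h0 (by simpa [h] using τ.apply_symm_apply 0),
      alternatingMap_apply_eta_fin_two]
    simp only [Function.comp_apply, apply_symm_apply]
    rw [consPair_apply_eq_zero_of_fst_eq_zero he.1 huv hu hv (0, 0) (0, 1) rfl, mul_zero]

theorem wedgeRaw_wpow_apply_consPair (α ω : V [⋀^Fin 2]→ₗ[ℝ] ℝ) (k : ℕ) (u v : V)
    (e : Fin k × Fin 2 → V) (he : IsSymplecticFamily ω e) (huv : ω ![u, v] = 0)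
    (hu : ∀ x, ω ![u, e x] = 0) (hv : ∀ x, ω ![v, e x] = 0) :
    wedgeRaw 2 (2 * k) ⇑α (wpow ω k)
        (consPair u v e ∘ (pairEquiv (show (k + 1) * 2 = 2 + 2 * k by ring)).symm) =
      k.factorial * α ![u, v] := by
  rw [wedgeRaw_wpow_apply_eq_sum_perm,
    Finset.sum_congr rfl fun τ _ => prod_consPair_eq_ite α ω he huv hu hv τ,
    sum_perm_ite_apply_zero_eq_zero, mul_left_comm, ← mul_assoc (2 ^ (k + 1)), ← mul_pow]
  · norm_num
  have hoff := consPair_apply_eq_zero_of_fst_ne he.1 hu hv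
  have hhead := consPair_apply_eq_zero_of_fst_eq_zero he.1 huv hu hv
  intro ψ hψ
  have hω : ∀ j : Fin k,
      ω ![consPair u v e (ψ (j.succ, 0)), consPair u v e (ψ (j.succ, 1))] ≠ 0 := by
    intro j h
    refine hψ (Finset.prod_eq_zero (i := j.succ) (mem_univ _) ?_)
    rw [if_neg (Fin.succ_ne_zero j), alternatingMap_apply_eta_fin_two]
    exact mul_eq_zero_of_right _ h
  refine fst_apply_eq_of_succ ψ (fun j => by_contra fun h => hω j (hoff _ _ h)) fun j b h => ?_
  obtain rfl | rfl : b = 0 ∨ b = 1 := by omega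
  · exact hω j (hhead _ _ h)
  · exact hω j (by rw [alternatingMap_fin_two_swap, hhead _ _ h, neg_zero])

end Evaluation

section AltBilinForm

open Module Submodule

variable {K V : Type*} [Field K] [AddCommGroup V] [Module K V] {B : LinearMap.BilinForm K V}
  {W : Submodule K V} {z₁ z₂ : V}

theorem add_smul_sub_smul_mem_ker_inf_ker (hB : B.IsAlt) (h₁₂ : B z₁ z₂ = 1) (x : V) :
    x + B z₂ x • z₁ - B z₁ x • z₂ ∈ LinearMap.ker (B z₁) ⊓ LinearMap.ker (B z₂) := by
  have h₂₁ : B z₂ z₁ = -1 := by rw [← hB.neg_eq, h₁₂]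
  constructor <;> simp [h₁₂, h₂₁, hB z₁, hB z₂]

theorem finrank_le_finrank_inf_ker_add_two [FiniteDimensional K V] (hB : B.IsAlt) (hz₁ : z₁ ∈ W)
    (hz₂ : z₂ ∈ W) (h₁₂ : B z₁ z₂ = 1) :
    finrank K W ≤ finrank K ↥(W ⊓ LinearMap.ker (B z₁) ⊓ LinearMap.ker (B z₂)) + 2 := by
  set W' := W ⊓ LinearMap.ker (B z₁) ⊓ LinearMap.ker (B z₂)
  have hle : W ≤ W' ⊔ span K (Set.range ![z₁, z₂]) := fun x hx => by
    have hker := add_smul_sub_smul_mem_ker_inf_ker hB h₁₂ x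
    have hx' : x + B z₂ x • z₁ - B z₁ x • z₂ ∈ W' :=
      ⟨⟨W.sub_mem (W.add_mem hx (W.smul_mem _ hz₁)) (W.smul_mem _ hz₂), hker.1⟩, hker.2⟩
    rw [show x = (x + B z₂ x • z₁ - B z₁ x • z₂) + (B z₁ x • z₂ - B z₂ x • z₁) by abel]
    exact add_mem_sup hx' (sub_mem (smul_mem _ _ (subset_span ⟨1, rfl⟩))
      (smul_mem _ _ (subset_span ⟨0, rfl⟩)))
  calc finrank K W ≤ finrank K ↥(W' ⊔ span K (Set.range ![z₁, z₂])) := finrank_mono hle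
    _ ≤ finrank K W' + finrank K ↥(span K (Set.range ![z₁, z₂])) :=
      finrank_add_le_finrank_add_finrank _ _
    _ ≤ finrank K W' + 2 := by
      gcongr
      exact (finrank_range_le_card (R := K) ![z₁, z₂]).trans_eq (Fintype.card_fin 2)

theorem inf_ker_inf_orthogonal_le (hB : B.IsAlt) (hz₁ : z₁ ∈ W) (hz₂ : z₂ ∈ W)
    (h₁₂ : B z₁ z₂ = 1) :
    W ⊓ LinearMap.ker (B z₁) ⊓ LinearMap.ker (B z₂) ⊓
        B.orthogonal (W ⊓ LinearMap.ker (B z₁) ⊓ LinearMap.ker (B z₂)) ≤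
      W ⊓ B.orthogonal W := by
  rintro x ⟨⟨⟨hxW, hx₁⟩, hx₂⟩, hxo⟩
  refine ⟨hxW, fun y hy => ?_⟩
  have hker := add_smul_sub_smul_mem_ker_inf_ker hB h₁₂ y
  have := hxo _ ⟨⟨W.sub_mem (W.add_mem hy (W.smul_mem _ hz₁)) (W.smul_mem _ hz₂), hker.1⟩,
    hker.2⟩
  simpa [LinearMap.mem_ker.1 hx₁, LinearMap.mem_ker.1 hx₂] using this

end AltBilinForm

section SymplecticLinearAlgebra

open Module Submodule LinearMap.BilinForm

variable {V : Type*} [AddCommGroup V] [Module ℝ V]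

def twoFormBilin (ω : V [⋀^Fin 2]→ₗ[ℝ] ℝ) : LinearMap.BilinForm ℝ V :=
  LinearMap.mk₂ ℝ (fun x y => ω ![x, y]) (fun _ _ _ => ω.map_vecCons_add _ _ _)
    (fun _ _ _ => ω.map_vecCons_smul _ _ _) (fun x _ _ => (ω.curryLeft x).map_vecCons_add _ _ _)
    (fun _ x _ => (ω.curryLeft x).map_vecCons_smul _ _ _)

@[simp] theorem twoFormBilin_apply (ω : V [⋀^Fin 2]→ₗ[ℝ] ℝ) (x y : V) :
    twoFormBilin ω x y = ω ![x, y] := rfl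

theorem twoFormBilin_isRefl (ω : V [⋀^Fin 2]→ₗ[ℝ] ℝ) : (twoFormBilin ω).IsRefl :=
  LinearMap.IsAlt.isRefl fun x => alternatingMap_fin_two_self ω x

theorem twoFormBilin_nondegenerate {ω : V [⋀^Fin 2]→ₗ[ℝ] ℝ}
    (hnd : ∀ u : V, (∀ w : V, ω ![u, w] = 0) → u = 0) : (twoFormBilin ω).Nondegenerate :=
  (twoFormBilin_isRefl ω).nondegenerate_iff_separatingLeft.2 hnd

theorem exists_isSymplecticFamily_of_finrank_inf_orthogonal [FiniteDimensional ℝ V]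
    (ω : V [⋀^Fin 2]→ₗ[ℝ] ℝ) (k : ℕ) (W : Submodule ℝ V)
    (hW : 2 * k + finrank ℝ ↥(W ⊓ (twoFormBilin ω).orthogonal W) ≤ finrank ℝ W) :
    ∃ e : Fin k × Fin 2 → V, (∀ x, e x ∈ W) ∧ IsSymplecticFamily ω e := by
  -- splitting off a pair `z₁, z₂` with `ω(z₁, z₂) = 1` lowers `finrank W` by at most two without
  -- enlarging the radical `W ⊓ W^ω`
  induction k generalizing W with
  | zero => exact ⟨fun x => x.1.elim0, fun x => x.1.elim0, fun x => x.1.elim0, fun i => i.elim0⟩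
  | succ k ih =>
    set B := twoFormBilin ω
    obtain ⟨z₁, hz₁, z₂, hz₂, h₁₂⟩ : ∃ z₁ ∈ W, ∃ z₂ ∈ W, ω ![z₁, z₂] = 1 := by
      have hle : ¬ W ≤ B.orthogonal W := fun hle => by
        rw [inf_eq_left.2 hle] at hW
        omega
      obtain ⟨y, hyW, hy⟩ := SetLike.not_le_iff_exists.1 hle
      obtain ⟨x, hxW, hxy⟩ : ∃ x ∈ W, B x y ≠ 0 := by simpa [mem_orthogonal_iff] using hy
      exact ⟨(B x y)⁻¹ • x, W.smul_mem _ hxW, y, hyW,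
        show B ((B x y)⁻¹ • x) y = 1 by simp [hxy]⟩
    have hB : B.IsAlt := alternatingMap_fin_two_self ω
    obtain ⟨e, he_mem, he⟩ := ih (W ⊓ LinearMap.ker (B z₁) ⊓ LinearMap.ker (B z₂)) (by
      have := finrank_mono (inf_ker_inf_orthogonal_le hB hz₁ hz₂ h₁₂)
      have := finrank_le_finrank_inf_ker_add_two hB hz₁ hz₂ h₁₂
      omega)
    refine ⟨consPair z₁ z₂ e, ?_,
      isSymplecticFamily_consPair he h₁₂ (fun x => (he_mem x).1.2) (fun x => (he_mem x).2)⟩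
    rintro ⟨i, b⟩
    cases i using Fin.cases
    · fin_cases b
      exacts [hz₁, hz₂]
    · exact (he_mem _).1.1

theorem exists_isSymplecticFamily [FiniteDimensional ℝ V] {ω : V [⋀^Fin 2]→ₗ[ℝ] ℝ}
    (hω : (twoFormBilin ω).Nondegenerate) (k : ℕ) (W : Submodule ℝ V)
    (hW : 2 * k + finrank ℝ V ≤ 2 * finrank ℝ W) :
    ∃ e : Fin k × Fin 2 → V, (∀ x, e x ∈ W) ∧ IsSymplecticFamily ω e := by
  refine exists_isSymplecticFamily_of_finrank_inf_orthogonal ω k W ?_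
  have hrad := finrank_mono (inf_le_right : W ⊓ (twoFormBilin ω).orthogonal W ≤ _)
  have horth := finrank_orthogonal hω W
  have hW' := W.finrank_le
  omega

theorem exists_eq_smul_of_forall_eq_zero [FiniteDimensional ℝ V] {ω : V [⋀^Fin 2]→ₗ[ℝ] ℝ}
    (hω : (twoFormBilin ω).Nondegenerate) (α : V [⋀^Fin 2]→ₗ[ℝ] ℝ)
    (h : ∀ u v, ω ![u, v] = 0 → α ![u, v] = 0) : ∃ c : ℝ, α = c • ω := by
  set B := twoFormBilin ω
  -- every vector is an eigenvector of `T = B⁻¹ ∘ α`, so `T` is a homothety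
  set T : V →ₗ[ℝ] V := (B.toDual hω).symm.toLinearMap ∘ₗ twoFormBilin α
  have hT : ∀ u v, B (T u) v = α ![u, v] := fun u v => apply_toDual_symm_apply (hB := hω) _ v
  have hcol : ∀ u, ∃ a : ℝ, T u = a • u := by
    intro u
    have hker : ⨅ _ : Unit, LinearMap.ker (B u) ≤ LinearMap.ker (twoFormBilin α u) := by
      intro v hv
      simpa using h u v (by simpa [B] using hv)
    obtain ⟨a, ha⟩ := mem_span_singleton.1 (by simpa using mem_span_of_iInf_ker_le_ker hker)
    refine ⟨a, sub_eq_zero.1 (hω.1 _ fun v => ?_)⟩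
    rw [map_sub, LinearMap.sub_apply, hT, map_smul, LinearMap.smul_apply, ← LinearMap.smul_apply,
      ha, twoFormBilin_apply, sub_self]
  obtain ⟨c, hc⟩ := LinearMap.exists_eq_smul_id_of_forall_notLinearIndependent (f := T)
      fun u hli => by
        obtain ⟨a, ha⟩ := hcol u
        have := (LinearIndependent.pair_iff.1 hli) a (-1) (by simp [ha])
        norm_num at this
  refine ⟨c, AlternatingMap.ext fun g => ?_⟩
  rw [alternatingMap_apply_eta_fin_two α, ← hT, hc, AlternatingMap.smul_apply,
    alternatingMap_apply_eta_fin_two ω]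
  simp [B]

end SymplecticLinearAlgebra

section Vanishing

open Module

variable {V : Type*} [AddCommGroup V] [Module ℝ V] [FiniteDimensional ℝ V]
  {ω : V [⋀^Fin 2]→ₗ[ℝ] ℝ} {k : ℕ}

theorem apply_eq_zero_of_wedgeRaw_wpow_eq_zero (hω : (twoFormBilin ω).Nondegenerate)
    (hk : 2 * k + 4 ≤ finrank ℝ V) {α : V [⋀^Fin 2]→ₗ[ℝ] ℝ}
    (H : ∀ v, wedgeRaw 2 (2 * k) ⇑α (wpow ω k) v = 0) {u v : V} (huv : ω ![u, v] = 0) :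
    α ![u, v] = 0 := by
  set U := Submodule.span ℝ (Set.range ![u, v])
  have hU : finrank ℝ U ≤ 2 :=
    (finrank_range_le_card (R := ℝ) ![u, v]).trans_eq (Fintype.card_fin 2)
  obtain ⟨e, he_mem, he⟩ := exists_isSymplecticFamily hω k ((twoFormBilin ω).orthogonal U) (by
    rw [LinearMap.BilinForm.finrank_orthogonal hω]
    omega)
  have hval := wedgeRaw_wpow_apply_consPair α ω k u v e he huv
    (fun x => he_mem x _ (Submodule.subset_span ⟨0, rfl⟩))
    (fun x => he_mem x _ (Submodule.subset_span ⟨1, rfl⟩))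
  rw [H] at hval
  exact (mul_eq_zero.1 hval.symm).resolve_left (Nat.cast_ne_zero.2 k.factorial_ne_zero)

theorem eq_zero_of_wedgeRaw_smul_wpow_eq_zero (hω : (twoFormBilin ω).Nondegenerate)
    (hk : 2 * k + 2 ≤ finrank ℝ V) {c : ℝ}
    (H : ∀ v, wedgeRaw 2 (2 * k) ⇑(c • ω) (wpow ω k) v = 0) : c = 0 := by
  obtain ⟨e, -, he⟩ := exists_isSymplecticFamily hω (k + 1) ⊤ (by rw [finrank_top]; omega)
  have hval := H (e ∘ (pairEquiv (show (k + 1) * 2 = 2 + 2 * k by ring)).symm)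
  rw [show ⇑(c • ω) = c • ⇑ω from rfl, wedgeRaw_smul_left, Pi.smul_apply,
    wedgeRaw_wpow_apply_of_isSymplecticFamily ω k e he, smul_eq_mul] at hval
  exact (mul_eq_zero.1 hval).resolve_right (Nat.cast_ne_zero.2 (k + 1).factorial_ne_zero)

end Vanishing

theorem two_form_wedge_power_eq_zero_iff_general
    {V : Type*} [AddCommGroup V] [Module ℝ V]
    (n : ℕ) (hn : 2 < n) (hdim : Module.finrank ℝ V = 2 * n)
    (ω : V [⋀^Fin 2]→ₗ[ℝ] ℝ)
    (hnd : ∀ u : V, (∀ w : V, ω ![u, w] = 0) → u = 0)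
    (k : ℕ) (hkn : k ≤ n - 2)
    (α : V [⋀^Fin 2]→ₗ[ℝ] ℝ) :
    (∀ v : Fin (2 + 2 * k) → V, wedgeRaw 2 (2 * k) ⇑α (wpow ⇑ω k) v = 0) ↔ α = 0 := by
  refine ⟨fun H => ?_, fun h v => by simp [h, wedgeRaw]⟩
  have : FiniteDimensional ℝ V := .of_finrank_pos (by omega)
  have hω := twoFormBilin_nondegenerate hnd
  obtain ⟨c, rfl⟩ := exists_eq_smul_of_forall_eq_zero hω α fun u v =>
    apply_eq_zero_of_wedgeRaw_wpow_eq_zero hω (by omega) H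
  rw [eq_zero_of_wedgeRaw_smul_wpow_eq_zero hω (by omega) H, zero_smul]

/-- For `n > 2` and `1 ≤ k ≤ n - 2`, a 2-form `α` satisfies `α ∧ ω^k = 0`
iff `α = 0`. -/
theorem two_form_wedge_power_eq_zero_iff
    {V : Type*} [AddCommGroup V] [Module ℝ V]
    (n : ℕ) (hn : 2 < n) (hdim : Module.finrank ℝ V = 2 * n)
    (ω : V [⋀^Fin 2]→ₗ[ℝ] ℝ)
    (hnd : ∀ u : V, (∀ w : V, ω ![u, w] = 0) → u = 0)
    (k : ℕ) (hk : 1 ≤ k) (hkn : k ≤ n - 2)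
    (α : V [⋀^Fin 2]→ₗ[ℝ] ℝ) :
    (∀ v : Fin (2 + 2 * k) → V, wedgeRaw 2 (2 * k) ⇑α (wpow ⇑ω k) v = 0) ↔ α = 0 :=
  two_form_wedge_power_eq_zero_iff_general n hn hdim ω hnd k hkn α

end
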